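/- arXiv:2211.06504 — 6 statements merged into one kernel-verified Lean document; each statement's English description precedes it below -/
import Mathlib

section
/- For positive integers a and b, the integral of ((ax))((bx)) over [0,1] equals gcd(a,b)^2/(12ab), where ((x)) denotes the first Bernoulli (sawtooth) function. -/
open Real

/-- The sawtooth (first Bernoulli) function `((x))`. -/
noncomputable def saw (x : ℝ) : ℝ := if Int.fract x = 0 then 0 else Int.fract x - 1/2

/-!
Write `a = a' d`, `b = b' d` with `d = gcd a b`. The integrand is `F (d x)` for the 1-periodic
`F y = ((a' y)) ((b' y))`, so the integral equals `∫₀¹ F` and we may assume `a`, `b` coprime.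
Then substitute `x = t / (a b)` and fold `[0, a b]` onto `[0, 1]`: the integral becomes
`(a b)⁻¹ ∫₀¹ ∑_{k < a b} (((s + k) / a)) (((s + k) / b)) ds`. By the Chinese remainder theorem,
`(k mod a, k mod b)` runs over all pairs of residues, so the sum factors as
`(∑_{i < a} (((s + i) / a))) (∑_{j < b} (((s + j) / b))) = ((s))²` by the distribution relation
`∑_{i < n} (((s + i) / n)) = ((s))`, and `∫₀¹ ((s))² ds = 1 / 12`.
-/

open MeasureTheory Finset Function

lemma sum_range_mul_mod_mod {M : Type*} [AddCommMonoid M] {a b : ℕ} (hco : a.Coprime b)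
    (f : ℕ → ℕ → M) :
    ∑ k ∈ range (a * b), f (k % a) (k % b) = ∑ i ∈ range a, ∑ j ∈ range b, f i j := by
  have hinj : Set.InjOn (fun k => (k % a, k % b)) (range (a * b)) := fun k hk l hl hkl => by
    simp only [coe_range, Set.mem_Iio, Prod.mk.injEq] at hk hl hkl
    exact ((Nat.modEq_and_modEq_iff_modEq_mul hco).1 hkl).eq_of_lt_of_lt hk hl
  have himage : (range (a * b)).image (fun k => (k % a, k % b)) = range a ×ˢ range b := by
    refine eq_of_subset_of_card_le (fun p hp => ?_) ?_
    · obtain ⟨k, hk, rfl⟩ := mem_image.1 hp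
      have hk_lt := mem_range.1 hk
      simp only [mem_product, mem_range]
      exact ⟨Nat.mod_lt _ (Nat.pos_of_ne_zero (by rintro rfl; simp at hk_lt)),
        Nat.mod_lt _ (Nat.pos_of_ne_zero (by rintro rfl; simp at hk_lt))⟩
    · rw [card_image_of_injOn hinj, card_product, card_range, card_range, card_range]
  rw [← sum_product', ← himage, sum_image hinj]

lemma intervalIntegral_zero_natCast_eq_integral_sum {E : Type*} [NormedAddCommGroup E]
    [NormedSpace ℝ E] {g : ℝ → E} {n : ℕ} (hg : IntervalIntegrable g volume 0 n) :
    ∫ x in (0 : ℝ)..n, g x = ∫ s in (0 : ℝ)..1, ∑ k ∈ range n, g (s + k) := by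
  have hpiece : ∀ k < n, IntervalIntegrable g volume k (k + 1 : ℕ) := fun k hk =>
    hg.mono_set (Set.uIcc_subset_uIcc
      (Set.mem_uIcc_of_le (by positivity) (by exact_mod_cast hk.le))
      (Set.mem_uIcc_of_le (by positivity) (by exact_mod_cast hk)))
  have hsum := intervalIntegral.sum_integral_adjacent_intervals (a := fun k : ℕ => (k : ℝ)) hpiece
  push_cast at hsum
  rw [intervalIntegral.integral_finsetSum fun k hk => by
    simpa using (hpiece k (mem_range.1 hk)).comp_add_right (k : ℝ)]
  simp_rw [intervalIntegral.integral_comp_add_right, zero_add, add_comm (1 : ℝ)]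
  exact hsum.symm

lemma Function.Periodic.intervalIntegral_comp_intCast_mul {E : Type*} [NormedAddCommGroup E]
    [NormedSpace ℝ E] {f : ℝ → E} {T : ℝ} (hf : Periodic f T)
    (h_int : IntervalIntegrable f volume 0 T) {n : ℤ} (hn : n ≠ 0) :
    ∫ x in (0 : ℝ)..T, f (n * x) = ∫ x in (0 : ℝ)..T, f x := by
  rcases eq_or_ne T 0 with rfl | hT
  · simp
  have hn' : (n : ℝ) ≠ 0 := by exact_mod_cast hn
  rw [intervalIntegral.integral_comp_mul_left f hn', mul_zero, ← zsmul_eq_mul, ← zero_add (n • T),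
    hf.intervalIntegral_add_zsmul_eq n 0 (hf.intervalIntegrable₀ hT h_int), zero_add,
    ← Int.cast_smul_eq_zsmul ℝ, smul_smul, inv_mul_cancel₀ hn', one_smul]

@[fun_prop]
lemma measurable_saw : Measurable saw :=
  Measurable.ite (measurableSet_eq_fun measurable_fract measurable_const) measurable_const
    (measurable_fract.sub measurable_const)

lemma abs_saw_le (x : ℝ) : |saw x| ≤ 1 / 2 := by
  unfold saw
  split_ifs
  · norm_num
  · rw [abs_le]
    constructor <;> linarith [Int.fract_nonneg x, Int.fract_lt_one x]

lemma intervalIntegrable_saw_mul_saw {g h : ℝ → ℝ} (hg : Measurable g) (hh : Measurable h)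
    (l u : ℝ) : IntervalIntegrable (fun x => saw (g x) * saw (h x)) volume l u := by
  refine (intervalIntegrable_const (c := (1 / 2 * (1 / 2) : ℝ))).mono_fun'
    ((measurable_saw.comp hg).mul (measurable_saw.comp hh)).aestronglyMeasurable
    (Filter.Eventually.of_forall fun x => ?_)
  dsimp only
  rw [norm_mul, Real.norm_eq_abs, Real.norm_eq_abs]
  exact mul_le_mul (abs_saw_le _) (abs_saw_le _) (abs_nonneg _) (by norm_num)

lemma periodic_saw : Periodic saw 1 := fun x => by simp [saw]

lemma periodic_saw_comp_natCast_mul (n : ℕ) : Periodic (fun y => saw (n * y)) 1 := fun y => by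
  simpa [mul_add] using periodic_saw.nat_mul n (n * y)

lemma saw_of_mem_Ioo {x : ℝ} (hx : x ∈ Set.Ioo 0 1) : saw x = x - 1 / 2 := by
  rw [saw, Int.fract_eq_self.2 ⟨hx.1.le, hx.2⟩, if_neg hx.1.ne']

lemma saw_add_natCast_div_eq_mod (s : ℝ) (k n : ℕ) :
    saw ((s + k) / n) = saw ((s + (k % n : ℕ)) / n) := by
  rcases eq_or_ne n 0 with rfl | hn
  · simp
  have hk : (s + k) / n = (s + (k % n : ℕ)) / n + (k / n : ℕ) * 1 := by
    have hdiv : (k : ℝ) = (k % n : ℕ) + n * (k / n : ℕ) := by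
      exact_mod_cast (Nat.mod_add_div k n).symm
    rw [hdiv]
    field_simp
    ring
  rw [hk, periodic_saw.nat_mul _]

lemma sum_range_saw_add_div {n : ℕ} (hn : n ≠ 0) {s : ℝ} (hs : s ∈ Set.Ioo 0 1) :
    ∑ r ∈ range n, saw ((s + r) / n) = saw s := by
  have hn' : (0 : ℝ) < n := by positivity
  have hmem : ∀ r ∈ range n, (s + r) / n ∈ Set.Ioo 0 1 := fun r hr => by
    have : (r : ℝ) + 1 ≤ n := by exact_mod_cast mem_range.1 hr
    constructor
    · exact div_pos (by linarith [hs.1, r.cast_nonneg (α := ℝ)]) hn'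
    · rw [div_lt_one hn']; linarith [hs.2]
  have gauss : (∑ r ∈ range n, (r : ℝ)) * 2 = n * (n - 1) := by
    have := congrArg (Nat.cast (R := ℝ)) (sum_range_id_mul_two n)
    push_cast [Nat.cast_pred (Nat.pos_of_ne_zero hn)] at this
    exact this
  rw [sum_congr rfl fun r hr => saw_of_mem_Ioo (hmem r hr), saw_of_mem_Ioo hs, sum_sub_distrib,
    ← sum_div, sum_add_distrib, sum_const, card_range, sum_const, card_range, nsmul_eq_mul,
    nsmul_eq_mul]
  field_simp
  linear_combination gauss

lemma sum_range_mul_saw_mul_saw {a b : ℕ} (hco : a.Coprime b) (ha : a ≠ 0) (hb : b ≠ 0) {s : ℝ}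
    (hs : s ∈ Set.Ioo 0 1) :
    ∑ k ∈ range (a * b), saw ((s + k) / a) * saw ((s + k) / b) = saw s ^ 2 := by
  rw [sum_congr rfl fun k _ => by
      rw [saw_add_natCast_div_eq_mod s k a, saw_add_natCast_div_eq_mod s k b],
    sum_range_mul_mod_mod hco fun i j => saw ((s + i) / a) * saw ((s + j) / b), ← sum_mul_sum,
    sum_range_saw_add_div ha hs, sum_range_saw_add_div hb hs, sq]

lemma integral_saw_sq : ∫ x in (0 : ℝ)..1, saw x ^ 2 = 1 / 12 := by
  rw [intervalIntegral.integral_congr_Ioo_of_le (g := fun x => (x - 1 / 2) ^ 2) zero_le_one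
    fun x hx => by simp only [saw_of_mem_Ioo hx]]
  simp only [intervalIntegral.integral_comp_sub_right (fun x => x ^ 2), integral_pow]
  norm_num

lemma integral_saw_mul_saw_of_coprime {a b : ℕ} (hco : a.Coprime b) (ha : a ≠ 0) (hb : b ≠ 0) :
    ∫ x in (0 : ℝ)..1, saw (a * x) * saw (b * x) = 1 / (12 * a * b) := by
  have hab : ((a * b : ℕ) : ℝ) ≠ 0 := by positivity
  let G : ℝ → ℝ := fun t => saw (t / a) * saw (t / b)
  calc ∫ x in (0 : ℝ)..1, saw (a * x) * saw (b * x)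
      = ∫ x in (0 : ℝ)..1, G ((a * b : ℕ) * x) := by
        congr 1; ext x
        simp only [G]
        rw [mul_comm]
        push_cast
        congr 2 <;> field_simp
    _ = ((a * b : ℕ) : ℝ)⁻¹ * ∫ t in (0 : ℝ)..(a * b : ℕ), G t := by
        rw [intervalIntegral.integral_comp_mul_left G hab, mul_zero, mul_one, smul_eq_mul]
    _ = ((a * b : ℕ) : ℝ)⁻¹ * ∫ s in (0 : ℝ)..1, saw s ^ 2 := by
        rw [intervalIntegral_zero_natCast_eq_integral_sum
          (intervalIntegrable_saw_mul_saw (by fun_prop) (by fun_prop) _ _),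
          intervalIntegral.integral_congr_Ioo_of_le zero_le_one fun s hs =>
            sum_range_mul_saw_mul_saw hco ha hb hs]
    _ = 1 / (12 * a * b) := by
        rw [integral_saw_sq]
        push_cast
        field_simp

theorem franel_integral (a b : ℕ) (ha : 0 < a) (hb : 0 < b) :
    ∫ x in (0:ℝ)..1, saw (a * x) * saw (b * x) = (Nat.gcd a b : ℝ)^2 / (12 * a * b) := by
  obtain ⟨d, a', b', hd, hco, rfl, rfl⟩ := Nat.exists_coprime' (Nat.gcd_pos_of_pos_left b ha)
  have ha' : a' ≠ 0 := by rintro rfl; simp at ha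
  have hb' : b' ≠ 0 := by rintro rfl; simp at hb
  have hF : Periodic (fun y => saw (a' * y) * saw (b' * y)) 1 :=
    (periodic_saw_comp_natCast_mul a').mul (periodic_saw_comp_natCast_mul b')
  calc ∫ x in (0 : ℝ)..1, saw ((a' * d : ℕ) * x) * saw ((b' * d : ℕ) * x)
      = ∫ x in (0 : ℝ)..1, saw (a' * ((d : ℤ) * x)) * saw (b' * ((d : ℤ) * x)) := by
        congr 1; ext x
        push_cast
        ring_nf
    _ = ∫ x in (0 : ℝ)..1, saw (a' * x) * saw (b' * x) :=
        hF.intervalIntegral_comp_intCast_mul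
          (intervalIntegrable_saw_mul_saw (by fun_prop) (by fun_prop) _ _)
          (by exact_mod_cast hd.ne')
    _ = 1 / (12 * a' * b') := integral_saw_mul_saw_of_coprime hco ha' hb'
    _ = ((a' * d).gcd (b' * d) : ℝ) ^ 2 / (12 * (a' * d : ℕ) * (b' * d : ℕ)) := by
        rw [Nat.gcd_mul_right, hco.gcd_eq_one, one_mul]
        push_cast
        field_simp
end

section
/- For coprime positive integers h and k, the Dedekind sums satisfy s(h,k) + s(k,h) = -1/4 + (1/12)(h/k + 1/(hk) + k/h). -/
/-!
Write `h n = k q_n + r_n` with `0 < r_n < k`. By coprimality `n ↦ r_n` permutes `[1, k)`, so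
`∑ r_n = ∑ n` and `∑ r_n² = ∑ n²`; this turns `s(h, k)` into an explicit rational function of
`h, k` minus `(1/2h) ∑ q_n (q_n + 1)`, and `s(k, h)` into one minus `(1/h) ∑ m ⌊k m / h⌋`.
Twice the second sum plus the first is the sum of `2 m` over the lattice points `(n, m)` of
`[1, k) × [1, h)`, counted below and above the diagonal `k m = h n`, hence equals
`(k - 1) h (h - 1)`.
-/

open Real

/-- The classical Dedekind sum `s(h,k)`. -/
noncomputable def dedekindSum (h k : ℕ) : ℝ :=
  ∑ n ∈ Finset.Ico 1 k, saw ((h * n : ℝ) / k) * saw ((n : ℝ) / k)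

open Finset

theorem natCast_mod_eq_sub_mul_div {R : Type*} [Ring R] (a k : ℕ) :
    ((a % k : ℕ) : R) = a - k * (a / k : ℕ) := by
  rw [eq_sub_iff_add_eq', ← Nat.cast_mul, ← Nat.cast_add, Nat.div_add_mod]

theorem filter_mul_le_mul_eq_Ico {a b n : ℕ} (hnb : n < b) :
    {m ∈ Ico 1 a | b * m ≤ a * n} = Ico 1 (a * n / b + 1) := by
  ext m
  simp only [mem_filter, mem_Ico, Nat.lt_succ_iff, Nat.le_div_iff_mul_le (by omega : 0 < b)]
  constructor
  · rintro ⟨⟨hm, -⟩, hle⟩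
    exact ⟨hm, by linarith⟩
  · rintro ⟨hm, hle⟩
    refine ⟨⟨hm, ?_⟩, by linarith⟩
    by_contra! ham
    nlinarith

theorem sum_Ico_one_succ_two_mul (q : ℕ) : ∑ m ∈ Ico 1 (q + 1), 2 * m = q * (q + 1) := by
  induction q with
  | zero => simp
  | succ q ih =>
    rw [sum_Ico_succ_top (by omega), ih]
    ring

theorem sum_Ico_one_natCast {K : Type*} [Field K] [CharZero K] (k : ℕ) :
    ∑ n ∈ Ico 1 k, (n : K) = k * (k - 1) / 2 := by
  induction k with
  | zero => simp
  | succ k ih =>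
    rcases k.eq_zero_or_pos with rfl | hk
    · simp
    rw [sum_Ico_succ_top hk, ih]
    push_cast
    ring

theorem sum_Ico_one_natCast_sq {K : Type*} [Field K] [CharZero K] (k : ℕ) :
    ∑ n ∈ Ico 1 k, (n : K) ^ 2 = k * (k - 1) * (2 * k - 1) / 6 := by
  induction k with
  | zero => simp
  | succ k ih =>
    rcases k.eq_zero_or_pos with rfl | hk
    · simp
    rw [sum_Ico_succ_top hk, ih]
    push_cast
    ring

theorem saw_natCast_div {a k : ℕ} (hk : k ≠ 0) (ha : a % k ≠ 0) :
    saw (a / k) = (a % k : ℕ) / k - 1 / 2 := by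
  rw [saw, Int.fract_div_natCast_eq_div_natCast_mod, if_neg (by positivity)]

namespace Nat.Coprime

variable {h k : ℕ}

theorem mul_mod_ne_zero (hco : h.Coprime k) {n : ℕ} (hn : 0 < n) (hnk : n < k) :
    h * n % k ≠ 0 := by
  intro hdvd
  have := Nat.le_of_dvd hn (hco.symm.dvd_of_dvd_mul_left (Nat.dvd_of_mod_eq_zero hdvd))
  omega

theorem sum_Ico_mul_mod {M : Type*} [AddCommMonoid M] (hco : h.Coprime k) (f : ℕ → M) :
    ∑ n ∈ Ico 1 k, f (h * n % k) = ∑ n ∈ Ico 1 k, f n := by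
  have hmaps : Set.MapsTo (h * · % k) (Ico 1 k : Set ℕ) (Ico 1 k) := by
    intro n hn
    simp only [coe_Ico, Set.mem_Ico] at hn ⊢
    have := hco.mul_mod_ne_zero hn.1 hn.2
    have := Nat.mod_lt (h * n) (by omega : 0 < k)
    omega
  have hinj : Set.InjOn (h * · % k) (Ico 1 k : Set ℕ) := by
    intro a ha b hb hab
    simp only [coe_Ico, Set.mem_Ico] at ha hb
    have := Nat.ModEq.cancel_left_of_coprime hco.symm hab
    rwa [Nat.ModEq, Nat.mod_eq_of_lt ha.2, Nat.mod_eq_of_lt hb.2] at this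
  have hbij := ((Ico 1 k).finite_toSet.injOn_iff_bijOn_of_mapsTo hmaps).mp hinj
  exact sum_nbij _ (fun n hn => hmaps hn) hinj hbij.surjOn (fun _ _ => rfl)

theorem sum_div_mul_succ_add_two_mul_sum_mul_div (hco : h.Coprime k) :
    ∑ n ∈ Ico 1 k, (h * n / k) * (h * n / k + 1) + 2 * ∑ m ∈ Ico 1 h, m * (k * m / h)
      = (k - 1) * (h * (h - 1)) := by
  have hrect : ∑ n ∈ Ico 1 k, ∑ m ∈ Ico 1 h, 2 * m = (k - 1) * (h * (h - 1)) := by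
    rcases h.eq_zero_or_pos with rfl | hh
    · simp
    obtain ⟨q, rfl⟩ : ∃ q, h = q + 1 := ⟨h - 1, by omega⟩
    rw [sum_const, sum_Ico_one_succ_two_mul, Nat.card_Ico, smul_eq_mul, Nat.add_sub_cancel,
      mul_comm q]
  have hbelow : ∀ n ∈ Ico 1 k, ∑ m ∈ Ico 1 h with k * m ≤ h * n, 2 * m
      = (h * n / k) * (h * n / k + 1) := by
    intro n hn
    rw [filter_mul_le_mul_eq_Ico (mem_Ico.1 hn).2, sum_Ico_one_succ_two_mul]
  have habove : ∑ n ∈ Ico 1 k, ∑ m ∈ Ico 1 h with ¬ k * m ≤ h * n, 2 * m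
      = 2 * ∑ m ∈ Ico 1 h, m * (k * m / h) := by
    rw [sum_comm' (s' := fun m => {n ∈ Ico 1 k | h * n ≤ k * m}) (t' := Ico 1 h), mul_sum]
    · refine sum_congr rfl fun m hm => ?_
      rw [sum_const, filter_mul_le_mul_eq_Ico (mem_Ico.1 hm).2, Nat.card_Ico, Nat.add_sub_cancel,
        smul_eq_mul]
      ring
    · intro n m
      simp only [mem_filter, mem_Ico]
      constructor
      · rintro ⟨hn, hm, hlt⟩
        exact ⟨⟨hn, by omega⟩, hm⟩
      · rintro ⟨⟨⟨hn, hnk⟩, hle⟩, hm⟩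
        have hne : h * n ≠ k * m := fun he =>
          hco.mul_mod_ne_zero hn hnk (Nat.mod_eq_zero_of_dvd ⟨m, he⟩)
        exact ⟨⟨hn, hnk⟩, hm, by omega⟩
  rw [← hrect, ← sum_congr rfl hbelow, ← habove, ← sum_add_distrib]
  exact sum_congr rfl fun n _ => sum_filter_add_sum_filter_not _ _ _

theorem dedekindSum_eq_sum_mul_div (hco : h.Coprime k) (hk : 0 < k) :
    12 * k * dedekindSum h k = 2 * h * (k - 1) * (2 * k - 1) - 3 * k * (k - 1)
      - 12 * ∑ n ∈ Ico 1 k, (n : ℝ) * (h * n / k : ℕ) := by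
  have hterm : ∀ n ∈ Ico 1 k, 12 * k * (saw (h * n / k) * saw (n / k))
      = 12 * h / k * (n : ℝ) ^ 2 - 12 * ((n : ℝ) * (h * n / k : ℕ)) - 6 * (h * n % k : ℕ)
        - 6 * (n : ℝ) + 3 * k := by
    intro n hn
    obtain ⟨hn1, hnk⟩ := mem_Ico.1 hn
    have hsaw := saw_natCast_div hk.ne' (hco.mul_mod_ne_zero hn1 hnk)
    have hsaw' := saw_natCast_div (a := n) hk.ne' (by rw [Nat.mod_eq_of_lt hnk]; omega)
    push_cast at hsaw
    rw [hsaw, hsaw', Nat.mod_eq_of_lt hnk, natCast_mod_eq_sub_mul_div]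
    field_simp
    push_cast
    ring
  rw [dedekindSum, mul_sum, sum_congr rfl hterm]
  simp only [sum_add_distrib, sum_sub_distrib, ← mul_sum, sum_const, Nat.card_Ico, nsmul_eq_mul]
  rw [hco.sum_Ico_mul_mod (fun r => (r : ℝ)), sum_Ico_one_natCast, sum_Ico_one_natCast_sq,
    Nat.cast_sub hk]
  field_simp
  ring

theorem dedekindSum_eq_sum_div_mul_succ (hco : h.Coprime k) (hk : 0 < k) :
    12 * h * k * dedekindSum h k = (h ^ 2 + 1) * (k - 1) * (2 * k - 1) - 3 * k * (k - 1)
      - 6 * k * ∑ n ∈ Ico 1 k, ((h * n / k : ℕ) : ℝ) * ((h * n / k : ℕ) + 1) := by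
  have hterm : ∀ n ∈ Ico 1 k,
      k * (12 * h * ((n : ℝ) * (h * n / k : ℕ))
        - 6 * k * (((h * n / k : ℕ) : ℝ) * ((h * n / k : ℕ) + 1)))
      = 6 * (h ^ 2 - 1) * (n : ℝ) ^ 2 - 6 * k * (h - 1) * n
        + 6 * ((n : ℝ) ^ 2 - ((h * n % k : ℕ) : ℝ) ^ 2)
        + 6 * k * (((h * n % k : ℕ) : ℝ) - n) := by
    intro n _
    rw [natCast_mod_eq_sub_mul_div]
    push_cast
    ring
  have hsum := sum_congr rfl hterm
  simp only [← mul_sum, sum_add_distrib, sum_sub_distrib] at hsum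
  rw [hco.sum_Ico_mul_mod (fun r => (r : ℝ)), hco.sum_Ico_mul_mod (fun r => (r : ℝ) ^ 2),
    sum_Ico_one_natCast, sum_Ico_one_natCast_sq] at hsum
  apply mul_left_cancel₀ (by positivity : (k : ℝ) ≠ 0)
  linear_combination h * k * hco.dedekindSum_eq_sum_mul_div hk - hsum

end Nat.Coprime

theorem dedekind_reciprocity (h k : ℕ) (hh : 0 < h) (hk : 0 < k) (hco : Nat.Coprime h k) :
    dedekindSum h k + dedekindSum k h =
      -1/4 + (1/12) * ((h : ℝ)/k + 1/(h*k) + (k : ℝ)/h) := by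
  have hcount := congrArg (Nat.cast : ℕ → ℝ) hco.sum_div_mul_succ_add_two_mul_sum_mul_div
  push_cast [Nat.cast_sub hh, Nat.cast_sub hk] at hcount
  calc dedekindSum h k + dedekindSum k h
      = 12 * h * k * (dedekindSum h k + dedekindSum k h) / (12 * h * k) := by field_simp
    _ = (h ^ 2 + k ^ 2 + 1 - 3 * h * k) / (12 * h * k) := by
      congr 1
      linear_combination hco.dedekindSum_eq_sum_div_mul_succ hk
        + k * hco.symm.dedekindSum_eq_sum_mul_div hh - 6 * k * hcount
    _ = -1/4 + (1/12) * ((h : ℝ)/k + 1/(h*k) + (k : ℝ)/h) := by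
      field_simp
      ring
end

section
/- For every positive integer a, ∫₀¹ ((ax))((x))⁵ dx = (16 - 28a² + 21a⁴)/(4032a⁵). -/
/-!
On each interval `(k/a, (k+1)/a)` with `k < a` both factors are polynomial:
`((a x)) = a x - k - 1/2` and `((x)) = x - 1/2`. So the integral splits into `a` integrals of
polynomials, and the resulting sum over `k` is evaluated in closed form.
-/

open Real

open Set intervalIntegral

lemma saw_eq_of_mem_Ioo {x : ℝ} {k : ℤ} (hx : x ∈ Ioo (k : ℝ) (k + 1)) :
    saw x = x - k - 1 / 2 := by
  have hfloor : ⌊x⌋ = k := Int.floor_eq_iff.mpr ⟨hx.1.le, hx.2⟩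
  have hfract : Int.fract x = x - k := by rw [Int.fract, hfloor]
  rw [saw, hfract, if_neg (by linarith [hx.1])]

lemma saw_eq_sub_half {x : ℝ} (hx : x ∈ Ioo 0 1) : saw x = x - 1 / 2 := by
  simpa using saw_eq_of_mem_Ioo (k := 0) (by simpa using hx)

lemma saw_mul_eq_of_mem_Ioo {a k : ℕ} (ha : 0 < a) {x : ℝ}
    (hx : x ∈ Ioo ((k : ℝ) / a) ((k + 1) / a)) : saw (a * x) = a * x - k - 1 / 2 := by
  have ha' : (0 : ℝ) < a := by exact_mod_cast ha
  obtain ⟨hlo, hhi⟩ := hx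
  rw [div_lt_iff₀ ha'] at hlo
  rw [lt_div_iff₀ ha'] at hhi
  exact_mod_cast saw_eq_of_mem_Ioo (k := k) ⟨by push_cast; linarith, by push_cast; linarith⟩

lemma integral_linear_mul_pow (c d u v : ℝ) (n : ℕ) :
    ∫ x in u..v, (c * (x - 1/2) + d) * (x - 1/2) ^ n =
      c * ((v - 1/2) ^ (n + 2) - (u - 1/2) ^ (n + 2)) / (n + 2)
        + d * ((v - 1/2) ^ (n + 1) - (u - 1/2) ^ (n + 1)) / (n + 1) := by
  rw [intervalIntegral.integral_comp_sub_right (fun y => (c * y + d) * y ^ n)]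
  simp only [add_mul, mul_assoc, ← pow_succ']
  rw [integral_add ((by fun_prop : Continuous _).intervalIntegrable _ _)
      ((by fun_prop : Continuous _).intervalIntegrable _ _),
    integral_const_mul, integral_const_mul, integral_pow, integral_pow]
  push_cast
  ring

lemma natCast_div_le_succ_div (k a : ℕ) : (k : ℝ) / a ≤ (k + 1) / a := by
  gcongr
  linarith

section Pieces

variable {a k : ℕ}

lemma saw_mul_saw_pow_eqOn_Ioo (ha : 0 < a) (hk : k < a) (n : ℕ) :
    EqOn (fun x => saw (a * x) * saw x ^ n)
      (fun x => (a * (x - 1/2) + (a / 2 - k - 1/2)) * (x - 1/2) ^ n)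
      (Ioo ((k : ℝ) / a) ((k + 1) / a)) := by
  intro x hx
  have hsub : Ioo ((k : ℝ) / a) ((k + 1) / a) ⊆ Ioo 0 1 := by
    have : ((k : ℝ) + 1) / a ≤ 1 := by
      rw [div_le_one (by exact_mod_cast ha)]
      exact_mod_cast hk
    exact Ioo_subset_Ioo (by positivity) this
  simp only [saw_mul_eq_of_mem_Ioo ha hx, saw_eq_sub_half (hsub hx)]
  ring

lemma intervalIntegrable_saw_mul_saw_pow (ha : 0 < a) (hk : k < a) (n : ℕ) :
    IntervalIntegrable (fun x => saw (a * x) * saw x ^ n) MeasureTheory.volume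
      ((k : ℝ) / a) ((k + 1) / a) := by
  rw [intervalIntegrable_iff_integrableOn_Ioo_of_le (natCast_div_le_succ_div k a)]
  refine MeasureTheory.IntegrableOn.congr_fun ?_ (saw_mul_saw_pow_eqOn_Ioo ha hk n).symm
    measurableSet_Ioo
  rw [← intervalIntegrable_iff_integrableOn_Ioo_of_le (natCast_div_le_succ_div k a)]
  exact (by fun_prop : Continuous _).intervalIntegrable _ _

lemma integral_saw_mul_saw_pow_five_piece (ha : 0 < a) (hk : k < a) :
    ∫ x in (k : ℝ) / a..(k + 1) / a, saw (a * x) * saw x ^ 5 =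
      a * (((k + 1) / a - 1/2) ^ 7 - (k / a - 1/2) ^ 7) / 7
        + (a / 2 - k - 1/2) * (((k + 1) / a - 1/2) ^ 6 - (k / a - 1/2) ^ 6) / 6 := by
  rw [integral_congr_Ioo_of_le (natCast_div_le_succ_div k a) (saw_mul_saw_pow_eqOn_Ioo ha hk 5),
    integral_linear_mul_pow]
  norm_num

end Pieces

/-- `A` is kept independent of the number of terms `n` so that induction on `n` applies;
the theorem is the case `n = A = a`. -/
lemma sum_range_piece_integrals (A : ℝ) (hA : A ≠ 0) (n : ℕ) :
    ∑ k ∈ Finset.range n,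
      (A * (((k + 1) / A - 1/2) ^ 7 - (k / A - 1/2) ^ 7) / 7
        + (A / 2 - k - 1/2) * (((k + 1) / A - 1/2) ^ 6 - (k / A - 1/2) ^ 6) / 6) =
      (n / 252 - n ^ 3 / 36 + n ^ 5 / 12 + A * n ^ 2 / 24 - 5 * A * n ^ 4 / 24
        - A ^ 2 * n / 48 + 5 * A ^ 2 * n ^ 3 / 24 - 5 * A ^ 3 * n ^ 2 / 48
        + 5 * A ^ 4 * n / 192) / A ^ 6 := by
  induction n with
  | zero => simp
  | succ m ih =>
    rw [Finset.sum_range_succ, ih]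
    push_cast
    field_simp
    ring

theorem franel_a1x5 (a : ℕ) (ha : 0 < a) :
    ∫ x in (0:ℝ)..1, saw (a * x) * (saw x)^5 =
      (16 - 28 * (a:ℝ)^2 + 21 * (a:ℝ)^4) / (4032 * (a:ℝ)^5) := by
  have hA : (a : ℝ) ≠ 0 := by positivity
  have hsplit := sum_integral_adjacent_intervals (a := fun k : ℕ => (k : ℝ) / a) (n := a)
    (f := fun x => saw (a * x) * saw x ^ 5) (μ := MeasureTheory.volume) fun k hk => by
      simpa using intervalIntegrable_saw_mul_saw_pow ha hk 5
  simp only [Nat.cast_zero, zero_div, div_self hA, Nat.cast_add, Nat.cast_one] at hsplit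
  rw [← hsplit, Finset.sum_congr rfl fun k hk =>
      integral_saw_mul_saw_pow_five_piece ha (Finset.mem_range.mp hk),
    sum_range_piece_integrals _ hA]
  field_simp
  ring
end

section
/- If a is an odd multiple of 3, then the fraction (5a-2)/(240a³) is in lowest terms; that is, gcd(5a - 2, 240a³) = 1 when a = 3m with m odd. -/
theorem mcintosh_constant_sharp (m : ℕ) (hm : Odd m) :
    Nat.gcd (5 * (3 * m) - 2) (240 * (3 * m)^3) = 1 := by
  obtain ⟨k, rfl⟩ := hm
  have e1 : 5 * (3 * (2*k+1)) - 2 = 30*k+13 := by omega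
  have e2 : 240 * (3 * (2*k+1))^3 = 2^4*(3^4*(5*(2*k+1)^3)) := by ring
  rw [e1, e2]
  have h2 : Nat.Coprime (30*k+13) 2 :=
    ((Nat.Prime.coprime_iff_not_dvd Nat.prime_two).mpr (by omega)).symm
  have h3 : Nat.Coprime (30*k+13) 3 :=
    ((Nat.Prime.coprime_iff_not_dvd Nat.prime_three).mpr (by omega)).symm
  have h5 : Nat.Coprime (30*k+13) 5 :=
    ((Nat.Prime.coprime_iff_not_dvd (by norm_num)).mpr (by omega)).symm
  have hgm : Nat.Coprime (30*k+13) (2*k+1) := by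
    have d1 := Nat.gcd_dvd_left (30*k+13) (2*k+1)
    have d2 := Nat.gcd_dvd_right (30*k+13) (2*k+1)
    have d3 : Nat.gcd (30*k+13) (2*k+1) ∣ 2 := by
      have := Nat.dvd_sub (Dvd.dvd.mul_left d2 15) d1
      have h : 15*(2*k+1) - (30*k+13) = 2 := by omega
      rwa [h] at this
    rcases (Nat.dvd_prime Nat.prime_two).mp d3 with h | h
    · exact h
    · rw [h] at d2; omega
  exact (h2.pow_right 4).mul_right
    ((h3.pow_right 4).mul_right (h5.mul_right (hgm.pow_right 3)))
end

section
/- For any positive integers r, a₁,...,a_{2n}, and any k ≥ 0, n ≥ 1: ∫₀¹ ∏_{i=1}^{2n} B̃_{2k+1}(r aᵢ x) dx = ∫₀¹ ∏_{i=1}^{2n} B̃_{2k+1}(aᵢ x) dx. -/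
/-!
Substituting `y = r x` turns the integral of `F (r x)` over one period into `1/r` times the
integral of `F` over `r` periods, which is the integral over one period since
`F x = ∏ᵢ B̃(aᵢ x)` is `1`-periodic.
-/

open Real

/-- The periodic Bernoulli function `B̃ₘ(x) = Bₘ(x - ⌊x⌋)`. -/
noncomputable def periodicBernoulli (m : ℕ) (x : ℝ) : ℝ :=
  Polynomial.aeval (Int.fract x) (Polynomial.bernoulli m)

open MeasureTheory Function

theorem Function.Periodic.comp_natCast_mul {α β : Type*} [Semiring α] {f : α → β} {c : α}
    (hf : Periodic f c) (n : ℕ) : Periodic (fun x => f (n * x)) c := fun x => by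
  simpa only [mul_add] using hf.nat_mul n (n * x)

theorem Function.Periodic.intervalIntegral_comp_natCast_mul {E : Type*} [NormedAddCommGroup E]
    [NormedSpace ℝ E] {f : ℝ → E} {T : ℝ} (hf : Periodic f T)
    (hint : ∀ t₁ t₂, IntervalIntegrable f volume t₁ t₂) {n : ℕ} (hn : n ≠ 0) :
    ∫ x in 0..T, f (n * x) = ∫ x in 0..T, f x := by
  have hn' : (n : ℝ) ≠ 0 := Nat.cast_ne_zero.mpr hn
  have hperiods : ∫ x in 0..n * T, f x = n • ∫ x in 0..T, f x := by
    simpa using hf.intervalIntegral_add_zsmul_eq n 0 hint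
  rw [intervalIntegral.integral_comp_mul_left _ hn', mul_zero, hperiods,
    ← Nat.cast_smul_eq_nsmul ℝ, inv_smul_smul₀ hn']

theorem periodicBernoulli_periodic (m : ℕ) : Periodic (periodicBernoulli m) 1 := fun x => by
  simp only [periodicBernoulli, Int.fract_add_one]

theorem measurable_periodicBernoulli (m : ℕ) : Measurable (periodicBernoulli m) :=
  (Polynomial.continuous_aeval (A := ℝ) _).measurable.comp measurable_fract

theorem exists_abs_periodicBernoulli_le (m : ℕ) : ∃ C, ∀ x, |periodicBernoulli m x| ≤ C := by
  obtain ⟨C, hC⟩ := isCompact_Icc.exists_bound_of_continuousOn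
    (Polynomial.continuous_aeval (A := ℝ) (Polynomial.bernoulli m)).continuousOn
  exact ⟨C, fun x => hC (Int.fract x) ⟨Int.fract_nonneg x, (Int.fract_lt_one x).le⟩⟩

theorem memLp_top_periodicBernoulli_comp {α : Type*} [MeasurableSpace α] (m : ℕ) {g : α → ℝ}
    (hg : Measurable g) (μ : Measure α) :
    MemLp (fun x => periodicBernoulli m (g x)) ⊤ μ := by
  obtain ⟨C, hC⟩ := exists_abs_periodicBernoulli_le m
  exact memLp_top_of_bound ((measurable_periodicBernoulli m).comp hg).aestronglyMeasurable C
    (ae_of_all _ fun x => hC (g x))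

theorem intervalIntegrable_prod_periodicBernoulli {ι : Type*} (s : Finset ι) (m : ℕ) (c : ι → ℝ)
    (t₁ t₂ : ℝ) :
    IntervalIntegrable (fun x => ∏ i ∈ s, periodicBernoulli m (c i * x)) volume t₁ t₂ := by
  rw [intervalIntegrable_iff]
  have hmem := MemLp.prod' (s := s) (p := fun _ => ⊤) (μ := volume.restrict (Set.uIoc t₁ t₂))
    fun i _ => memLp_top_periodicBernoulli_comp m (measurable_const_mul (c i)) _
  simp only [ENNReal.inv_top, Finset.sum_const_zero, ENNReal.inv_zero] at hmem
  have : IsFiniteMeasure (volume.restrict (Set.uIoc t₁ t₂)) :=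
    isFiniteMeasure_restrict.mpr measure_Ioc_lt_top.ne
  exact hmem.integrable le_top

theorem bernoulli_integral_scaling_invariant_general (k n r : ℕ) (hr : 0 < r)
    (a : Fin (2 * n) → ℕ) :
    ∫ x in (0:ℝ)..1, ∏ i, periodicBernoulli (2 * k + 1) ((r * a i : ℕ) * x) =
      ∫ x in (0:ℝ)..1, ∏ i, periodicBernoulli (2 * k + 1) (a i * x) := by
  set F : ℝ → ℝ := fun x => ∏ i, periodicBernoulli (2 * k + 1) (a i * x)
  have hF : Periodic F 1 := by
    simpa only [Finset.prod_fn] using Finset.univ.periodic_prod fun i _ =>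
      (periodicBernoulli_periodic (2 * k + 1)).comp_natCast_mul (a i)
  calc ∫ x in (0:ℝ)..1, ∏ i, periodicBernoulli (2 * k + 1) ((r * a i : ℕ) * x)
      = ∫ x in (0:ℝ)..1, F (r * x) := by simp only [F, Nat.cast_mul, mul_assoc, mul_left_comm]
    _ = ∫ x in (0:ℝ)..1, F x := hF.intervalIntegral_comp_natCast_mul
        (intervalIntegrable_prod_periodicBernoulli _ _ _) hr.ne'

theorem bernoulli_integral_scaling_invariant (k n r : ℕ) (hn : 0 < n) (hr : 0 < r)
    (a : Fin (2 * n) → ℕ) (ha : ∀ i, 0 < a i) :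
    ∫ x in (0:ℝ)..1, ∏ i, periodicBernoulli (2 * k + 1) ((r * a i : ℕ) * x) =
      ∫ x in (0:ℝ)..1, ∏ i, periodicBernoulli (2 * k + 1) (a i * x) :=
  bernoulli_integral_scaling_invariant_general k n r hr a
end

section
/- For positive integers a, b, c, e, the sum L(a,b,c,e) = Σ 1/(stuv), taken over all quadruples of nonzero integers (s,t,u,v) with as + bt + cu + ev = 0, equals 16π⁴ · ∫₀¹ ((ax))((bx))((cx))((ex)) dx. -/
open Real

/-!
The sawtooth has Fourier coefficients `-1 / (2πi s)`, so `x ↦ ((n x))` has the coefficient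
`-1 / (2πi s)` at `n s` and none off `nℤ`. Parseval's identity, applied to `e_k · ((a x))` and
`((b x))`, makes the `k`-th coefficient of `((a x))((b x))` the sum of the products of two such
coefficients over the nonzero solutions of `a s + b t = k`; applied once more to `((a x))((b x))`
and `((c x))((e x))`, it turns the integral into the sum over the hyperplane
`a s + b t + c u + e v = 0` of products of four coefficients, i.e. of `1 / (16 π⁴ s t u v)`.
Regrouping that sum by `k = c u + e v` is legitimate because it converges absolutely: by AM-GM,
`1 / |s t u v|` is at most the sum of `|t u v|^(-4/3)`, `|s u v|^(-4/3)`, `|s t v|^(-4/3)` and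
`|s t u|^(-4/3)`, and each of these is summable over the hyperplane, which projects injectively
to any three of the coordinates.
-/

open Complex MeasureTheory AddCircle Function ComplexConjugate

namespace Franel

section FourierCoefficients

variable {T : ℝ} [Fact (0 < T)]

theorem hasSum_conj_fourierCoeff_mul_fourierCoeff {f g : AddCircle T → ℂ}
    (hf : MemLp f 2 haarAddCircle) (hg : MemLp g 2 haarAddCircle) :
    HasSum (fun i => conj (fourierCoeff f i) * fourierCoeff g i)
      (∫ x, conj (f x) * g x ∂haarAddCircle) := by
  have hrepr : ∀ {h : AddCircle T → ℂ} (hh : MemLp h 2 haarAddCircle) (i : ℤ),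
      inner ℂ (fourierBasis i) (hh.toLp h) = fourierCoeff h i := fun hh i => by
    rw [← fourierBasis.repr_apply_apply, fourierBasis_repr, fourierCoeff_congr_ae hh.coeFn_toLp]
  have hinner : inner ℂ (hf.toLp f) (hg.toLp g) = ∫ x, conj (f x) * g x ∂haarAddCircle := by
    rw [L2.inner_def]
    refine integral_congr_ae ?_
    filter_upwards [hf.coeFn_toLp, hg.coeFn_toLp] with x hfx hgx
    rw [hfx, hgx, RCLike.inner_apply']
  have H := fourierBasis.hasSum_inner_mul_inner (hf.toLp f) (hg.toLp g)
  rw [hinner] at H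
  refine H.congr_fun fun i => ?_
  rw [← inner_conj_symm, hrepr, hrepr]

-- Parseval's identity for `conj (e_{-k} f)` and `g`.
theorem hasSum_fourierCoeff_mul {f g : AddCircle T → ℂ} (hf : MemLp f 2 haarAddCircle)
    (hg : MemLp g 2 haarAddCircle) (k : ℤ) :
    HasSum (fun i => fourierCoeff f (k - i) * fourierCoeff g i)
      (fourierCoeff (fun x => f x * g x) k) := by
  set f' : AddCircle T → ℂ := fun x => conj (fourier (-k) x * f x)
  have hf' : MemLp f' 2 haarAddCircle := by
    refine MemLp.star (hf.of_le_mul (c := 1)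
      ((map_continuous _).aestronglyMeasurable.mul hf.1) (ae_of_all _ fun x => ?_))
    simp [Circle.norm_coe]
  have hcoeff : ∀ i, conj (fourierCoeff f' i) = fourierCoeff f (k - i) := fun i => by
    simp only [fourierCoeff, f', smul_eq_mul, ← integral_conj, map_mul, conj_conj, ← fourier_neg,
      ← mul_assoc, ← fourier_add]
    ring_nf
  convert hasSum_conj_fourierCoeff_mul_fourierCoeff hf' hg using 1
  · simp only [hcoeff]
  · simp only [fourierCoeff, f', smul_eq_mul, conj_conj, mul_assoc]

theorem fourierCoeff_comp_zsmul_mul {E : Type*} [NormedAddCommGroup E] [NormedSpace ℂ E]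
    {f : AddCircle T → E} (hf : AEStronglyMeasurable f haarAddCircle) {n : ℤ} (hn : n ≠ 0)
    (s : ℤ) : fourierCoeff (fun x => f (n • x)) (n * s) = fourierCoeff f s := by
  have hmp := Measure.measurePreserving_zsmul (haarAddCircle (T := T)) hn
  have hint : AEStronglyMeasurable (fun x => fourier (-s) x • f x) haarAddCircle :=
    (map_continuous _).aestronglyMeasurable.smul hf
  rw [fourierCoeff, fourierCoeff]
  conv_rhs => rw [← hmp.map_eq, integral_map hmp.measurable.aemeasurable (by rwa [hmp.map_eq])]
  congr 1 with x
  rw [fourier_apply, fourier_apply, smul_smul, neg_mul, mul_comm]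

-- Translating by `T / n` leaves `f (n • x)` unchanged but multiplies the coefficient by a
-- nontrivial `n`-th root of unity.
theorem fourierCoeff_comp_zsmul_of_not_dvd {E : Type*} [NormedAddCommGroup E] [NormedSpace ℂ E]
    (f : AddCircle T → E) {n j : ℤ} (hn : n ≠ 0) (hj : ¬ n ∣ j) :
    fourierCoeff (fun x => f (n • x)) j = 0 := by
  set y : AddCircle T := ((T / n : ℝ) : AddCircle T)
  have hny : n • y = 0 := by
    rw [← coe_zsmul, zsmul_eq_mul, mul_div_cancel₀ _ (Int.cast_ne_zero.mpr hn), coe_period]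
  have hζ : fourier (-j) y ≠ 1 := by
    rw [fourier_coe_apply, Ne, Complex.exp_eq_one_iff]
    rintro ⟨m, hm⟩
    have hT : (T : ℂ) ≠ 0 := ofReal_ne_zero.mpr (Fact.out : 0 < T).ne'
    have hn' : (n : ℂ) ≠ 0 := Int.cast_ne_zero.mpr hn
    have hjm : ((-j : ℤ) : ℂ) = ((m * n : ℤ) : ℂ) := by
      push_cast at hm ⊢
      field_simp at hm
      linear_combination hm
    exact hj ⟨-m, by linarith [Int.cast_injective hjm]⟩
  have hshift : fourierCoeff (fun x => f (n • x)) j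
      = fourier (-j) y • fourierCoeff (fun x => f (n • x)) j := by
    simp only [fourierCoeff]
    conv_lhs => rw [← integral_add_right_eq_self _ y]
    rw [← integral_smul]
    congr 1 with x
    simp only [smul_add, hny, add_zero, fourier_apply, toCircle_add, Circle.coe_mul, smul_smul,
      mul_comm]
  have hfix : (fourier (-j) y - 1) • fourierCoeff (fun x => f (n • x)) j = 0 := by
    rw [sub_smul, one_smul, ← hshift, sub_self]
  exact (smul_eq_zero.mp hfix).resolve_left (sub_ne_zero.mpr hζ)

end FourierCoefficients

section Sawtooth

theorem abs_saw_le_one (x : ℝ) : |saw x| ≤ 1 := by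
  unfold saw
  split_ifs
  · simp
  · rw [abs_le]
    constructor <;> linarith [Int.fract_nonneg x, Int.fract_lt_one x]

theorem measurable_saw : Measurable saw :=
  Measurable.ite (measurable_fract (measurableSet_singleton 0)) measurable_const
    (measurable_fract.sub measurable_const)

noncomputable def sawCircle : UnitAddCircle → ℝ := liftIco 1 0 saw

theorem sawCircle_coe (x : ℝ) : sawCircle x = saw x := by
  rw [← coe_fract, sawCircle, liftIco_coe_apply (by simpa using Int.fract_lt_one x)]
  simp only [saw, Int.fract_fract]

theorem measurable_sawCircle : Measurable sawCircle :=
  (measurable_saw.comp measurable_subtype_coe).comp (measurableEquivIco 1 0).measurable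

theorem abs_sawCircle_le_one (x : UnitAddCircle) : |sawCircle x| ≤ 1 := by
  induction x using QuotientAddGroup.induction_on with
  | H x => rw [sawCircle_coe]; exact abs_saw_le_one x

-- At `n = 0` division by zero gives `0`, which is also the mean of the sawtooth.
noncomputable def sawCoeff (n : ℤ) : ℂ := -1 / (2 * π * I * n)

theorem fourierCoeff_sawCircle (n : ℤ) :
    fourierCoeff (fun x => (sawCircle x : ℂ)) n = sawCoeff n := by
  have hlift : (fun x => (sawCircle x : ℂ)) = liftIco 1 0 (fun x => (saw x : ℂ)) := rfl
  have hB := bernoulliFourierCoeff_eq one_ne_zero n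
  rw [Nat.factorial_one, Nat.cast_one, pow_one] at hB
  rw [hlift, fourierCoeff_liftIco_eq, sawCoeff, ← hB, bernoulliFourierCoeff,
    fourierCoeffOn_eq_integral, fourierCoeffOn_eq_integral, zero_add]
  congr 1
  refine intervalIntegral.integral_congr_Ioo_of_le zero_le_one fun x hx => ?_
  rw [saw, Int.fract_eq_self.mpr ⟨hx.1.le, hx.2⟩, if_neg hx.1.ne', bernoulliFun_one]

end Sawtooth

section DilatedSaw

variable {n m : ℤ}

noncomputable def dilatedSaw (n : ℤ) (x : UnitAddCircle) : ℂ := sawCircle (n • x)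

theorem dilatedSaw_coe (n : ℤ) (x : ℝ) : dilatedSaw n x = saw (n * x) := by
  rw [dilatedSaw, ← coe_zsmul, zsmul_eq_mul, sawCircle_coe]

theorem memLp_dilatedSaw (n : ℤ) (p : ENNReal) : MemLp (dilatedSaw n) p haarAddCircle :=
  MemLp.of_bound (measurable_ofReal.comp
      (measurable_sawCircle.comp (continuous_zsmul n).measurable)).aestronglyMeasurable 1
    (ae_of_all _ fun x => by simpa [dilatedSaw] using abs_sawCircle_le_one (n • x))

theorem fourierCoeff_dilatedSaw_mul (hn : n ≠ 0) (s : ℤ) :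
    fourierCoeff (dilatedSaw n) (n * s) = sawCoeff s :=
  (fourierCoeff_comp_zsmul_mul (measurable_ofReal.comp measurable_sawCircle).aestronglyMeasurable
    hn s).trans (fourierCoeff_sawCircle s)

theorem exists_eq_mul_of_fourierCoeff_dilatedSaw_ne_zero (hn : n ≠ 0) {j : ℤ}
    (h : fourierCoeff (dilatedSaw n) j ≠ 0) : ∃ s ≠ 0, j = n * s := by
  by_cases hj : n ∣ j
  · obtain ⟨s, rfl⟩ := hj
    refine ⟨s, ?_, rfl⟩
    rintro rfl
    rw [fourierCoeff_dilatedSaw_mul hn] at h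
    simp [sawCoeff] at h
  · exact (h (fourierCoeff_comp_zsmul_of_not_dvd (fun x => (sawCircle x : ℂ)) hn hj)).elim

abbrev Pairs (n m k : ℤ) : Type := {q : ℤ × ℤ // q.1 ≠ 0 ∧ q.2 ≠ 0 ∧ n * q.1 + m * q.2 = k}

theorem hasSum_sawCoeff_pairs (hn : n ≠ 0) (hm : m ≠ 0) (k : ℤ) :
    HasSum (fun q : Pairs n m k => sawCoeff q.1.1 * sawCoeff q.1.2)
      (fourierCoeff (fun x => dilatedSaw n x * dilatedSaw m x) k) := by
  have hinj : Injective (fun q : Pairs n m k => m * q.1.2) := by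
    rintro ⟨⟨s, t⟩, _, _, h⟩ ⟨⟨s', t'⟩, _, _, h'⟩ hst
    obtain rfl : t = t' := mul_left_cancel₀ hm hst
    obtain rfl : s = s' := mul_left_cancel₀ hn (by linarith)
    rfl
  have hsupp : ∀ i ∉ Set.range (fun q : Pairs n m k => m * q.1.2),
      fourierCoeff (dilatedSaw n) (k - i) * fourierCoeff (dilatedSaw m) i = 0 := by
    intro i hi
    by_contra h
    obtain ⟨s, hs, hks⟩ :=
      exists_eq_mul_of_fourierCoeff_dilatedSaw_ne_zero hn (left_ne_zero_of_mul h)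
    obtain ⟨t, ht, rfl⟩ :=
      exists_eq_mul_of_fourierCoeff_dilatedSaw_ne_zero hm (right_ne_zero_of_mul h)
    exact hi ⟨⟨(s, t), hs, ht, by linarith⟩, rfl⟩
  refine ((hinj.hasSum_iff hsupp).mpr (hasSum_fourierCoeff_mul (memLp_dilatedSaw n 2)
    (memLp_dilatedSaw m 2) k)).congr_fun ?_
  rintro ⟨⟨s, t⟩, -, -, h⟩
  dsimp only [comp_apply]
  rw [show k - m * t = n * s by linarith, fourierCoeff_dilatedSaw_mul hn,
    fourierCoeff_dilatedSaw_mul hm]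

end DilatedSaw

section Quadruples

variable {a b c e : ℤ}

abbrev Quadruples (a b c e : ℤ) : Type :=
  {p : ℤ × ℤ × ℤ × ℤ // p.1 ≠ 0 ∧ p.2.1 ≠ 0 ∧ p.2.2.1 ≠ 0 ∧ p.2.2.2 ≠ 0 ∧
    a * p.1 + b * p.2.1 + c * p.2.2.1 + e * p.2.2.2 = 0}

def Quadruples.equivSigma (a b c e : ℤ) :
    Quadruples a b c e ≃ Σ k : ℤ, Pairs a b (-k) × Pairs c e k where
  toFun p := ⟨c * p.1.2.2.1 + e * p.1.2.2.2,
    ⟨(p.1.1, p.1.2.1), p.2.1, p.2.2.1, by linarith [p.2.2.2.2.2]⟩,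
    ⟨(p.1.2.2.1, p.1.2.2.2), p.2.2.2.1, p.2.2.2.2.1, rfl⟩⟩
  invFun x := ⟨(x.2.1.1.1, x.2.1.1.2, x.2.2.1.1, x.2.2.1.2), x.2.1.2.1, x.2.1.2.2.1,
    x.2.2.2.1, x.2.2.2.2.1, by linarith [x.2.1.2.2.2, x.2.2.2.2.2]⟩
  left_inv _ := rfl
  right_inv := by
    rintro ⟨k, q, ⟨⟨u, v⟩, hu, hv, rfl⟩⟩
    rfl

theorem mul_mul_mul_le_sum_pow_four (x y z w : ℝ) :
    x * y * z * w ≤ x ^ 4 + y ^ 4 + z ^ 4 + w ^ 4 := by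
  nlinarith [sq_nonneg (x ^ 2 - y ^ 2), sq_nonneg (z ^ 2 - w ^ 2), sq_nonneg (x * y - z * w),
    pow_two_nonneg (x ^ 2), pow_two_nonneg (y ^ 2), pow_two_nonneg (z ^ 2), pow_two_nonneg (w ^ 2)]

theorem summable_one_div_mul_mul_mul (ha : a ≠ 0) (hb : b ≠ 0) (hc : c ≠ 0) (he : e ≠ 0) :
    Summable (fun p : Quadruples a b c e =>
      1 / ((p.1.1 : ℝ) * p.1.2.1 * p.1.2.2.1 * p.1.2.2.2)) := by
  set g : ℤ → ℝ := fun n => |(n : ℝ)| ^ (-(1 / 3) : ℝ)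
  have hg3 : ∀ n, g n ^ 3 = |(n : ℝ)|⁻¹ := fun n => by
    rw [← Real.rpow_natCast, ← Real.rpow_mul (abs_nonneg _), ← Real.rpow_neg_one]
    norm_num
  have hg4 : Summable (fun n => g n ^ 4) := by
    refine (Real.summable_abs_int_rpow (by norm_num : (1 : ℝ) < 4 / 3)).congr fun n => ?_
    rw [← Real.rpow_natCast, ← Real.rpow_mul (abs_nonneg _)]
    norm_num
  set h : ℤ × ℤ × ℤ → ℝ := fun x => (g x.1 * g x.2.1 * g x.2.2) ^ 4
  have hh : Summable h := by
    have h0 : ∀ n, 0 ≤ g n ^ 4 := fun n => by positivity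
    refine (hg4.mul_of_nonneg (hg4.mul_of_nonneg hg4 h0 h0) h0 fun _ => by positivity).congr
      fun x => ?_
    simp only [h, mul_pow, mul_assoc]
  have i₁ : Injective (fun p : Quadruples a b c e => (p.1.2.1, p.1.2.2.1, p.1.2.2.2)) := by
    rintro ⟨⟨s, t, u, v⟩, _, _, _, _, hp⟩ ⟨⟨s', t', u', v'⟩, _, _, _, _, hp'⟩ hproj
    obtain ⟨rfl, rfl, rfl⟩ : t = t' ∧ u = u' ∧ v = v' := by simpa using hproj
    obtain rfl : s = s' := mul_left_cancel₀ ha (by linarith)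
    rfl
  have i₂ : Injective (fun p : Quadruples a b c e => (p.1.1, p.1.2.2.1, p.1.2.2.2)) := by
    rintro ⟨⟨s, t, u, v⟩, _, _, _, _, hp⟩ ⟨⟨s', t', u', v'⟩, _, _, _, _, hp'⟩ hproj
    obtain ⟨rfl, rfl, rfl⟩ : s = s' ∧ u = u' ∧ v = v' := by simpa using hproj
    obtain rfl : t = t' := mul_left_cancel₀ hb (by linarith)
    rfl
  have i₃ : Injective (fun p : Quadruples a b c e => (p.1.1, p.1.2.1, p.1.2.2.2)) := by
    rintro ⟨⟨s, t, u, v⟩, _, _, _, _, hp⟩ ⟨⟨s', t', u', v'⟩, _, _, _, _, hp'⟩ hproj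
    obtain ⟨rfl, rfl, rfl⟩ : s = s' ∧ t = t' ∧ v = v' := by simpa using hproj
    obtain rfl : u = u' := mul_left_cancel₀ hc (by linarith)
    rfl
  have i₄ : Injective (fun p : Quadruples a b c e => (p.1.1, p.1.2.1, p.1.2.2.1)) := by
    rintro ⟨⟨s, t, u, v⟩, _, _, _, _, hp⟩ ⟨⟨s', t', u', v'⟩, _, _, _, _, hp'⟩ hproj
    obtain ⟨rfl, rfl, rfl⟩ : s = s' ∧ t = t' ∧ u = u' := by simpa using hproj
    obtain rfl : v = v' := mul_left_cancel₀ he (by linarith)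
    rfl
  refine (((hh.comp_injective i₁).add (hh.comp_injective i₂)).add
    ((hh.comp_injective i₃).add (hh.comp_injective i₄))).of_norm_bounded fun p => ?_
  obtain ⟨⟨s, t, u, v⟩, -⟩ := p
  have hnorm : ‖1 / ((s : ℝ) * t * u * v)‖ =
      (g t * g u * g v) * (g s * g u * g v) * (g s * g t * g v) * (g s * g t * g u) := by
    simp only [norm_div, norm_one, norm_mul, Real.norm_eq_abs]
    trans (g s ^ 3 * g t ^ 3 * g u ^ 3 * g v ^ 3)
    · rw [hg3, hg3, hg3, hg3]
      simp only [one_div, mul_inv]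
    · ring
  rw [hnorm]
  refine (mul_mul_mul_le_sum_pow_four _ _ _ _).trans (le_of_eq ?_)
  simp only [h, comp_apply]
  ring

theorem sawCoeff_mul_mul_mul (s t u v : ℤ) :
    sawCoeff s * sawCoeff t * (sawCoeff u * sawCoeff v) =
      (((16 * π ^ 4)⁻¹ * (1 / ((s : ℝ) * t * u * v)) : ℝ) : ℂ) := by
  have hden : 2 * (π : ℂ) * I * s * (2 * π * I * t) * (2 * π * I * u * (2 * π * I * v)) =
      16 * π ^ 4 * (s * t * u * v) := by
    ring_nf
    rw [I_pow_four]
    ring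
  simp only [sawCoeff, div_mul_div_comm]
  push_cast
  rw [hden]
  ring

theorem hasSum_sawCoeff_quadruples (ha : a ≠ 0) (hb : b ≠ 0) (hc : c ≠ 0) (he : e ≠ 0)
    (hsum : Summable (fun p : Quadruples a b c e =>
      sawCoeff p.1.1 * sawCoeff p.1.2.1 * (sawCoeff p.1.2.2.1 * sawCoeff p.1.2.2.2))) :
    HasSum (fun p : Quadruples a b c e =>
        sawCoeff p.1.1 * sawCoeff p.1.2.1 * (sawCoeff p.1.2.2.1 * sawCoeff p.1.2.2.2))
      (fourierCoeff (fun x => dilatedSaw a x * dilatedSaw b x * (dilatedSaw c x * dilatedSaw e x))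
        0) := by
  obtain ⟨S, hS⟩ := hsum
  have hσ := (Quadruples.equivSigma a b c e).symm.hasSum_iff.mpr hS
  have hsf : ∀ k : ℤ, Summable (fun q : Pairs a b (-k) × Pairs c e k =>
      sawCoeff q.1.1.1 * sawCoeff q.1.1.2 * (sawCoeff q.2.1.1 * sawCoeff q.2.1.2)) := fun k =>
    (hσ.summable.comp_injective sigma_mk_injective).congr fun _ => by rfl
  have hfiber (k : ℤ) :=
    (hasSum_sawCoeff_pairs ha hb (-k)).mul (hasSum_sawCoeff_pairs hc he k) (hsf k)
  have hprod := hasSum_fourierCoeff_mul ((memLp_dilatedSaw b 2).mul (memLp_dilatedSaw a ⊤))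
    ((memLp_dilatedSaw e 2).mul (memLp_dilatedSaw c ⊤)) 0
  simp only [zero_sub] at hprod
  have hsigma := hσ.sigma fun k => (hfiber k).congr_fun fun _ => by rfl
  rw [hsigma.unique hprod] at hS
  exact hS

theorem fourierCoeff_zero_dilatedSaw_product (a b c e : ℤ) :
    fourierCoeff
        (fun x => dilatedSaw a x * dilatedSaw b x * (dilatedSaw c x * dilatedSaw e x)) 0 =
      ((∫ x in (0 : ℝ)..1, saw (a * x) * saw (b * x) * saw (c * x) * saw (e * x) : ℝ) : ℂ) := by
  rw [fourierCoeff_eq_intervalIntegral _ _ 0, zero_add, ← intervalIntegral.integral_ofReal]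
  simp [dilatedSaw_coe, mul_assoc]

theorem hasSum_one_div_mul_mul_mul (ha : a ≠ 0) (hb : b ≠ 0) (hc : c ≠ 0) (he : e ≠ 0) :
    HasSum (fun p : Quadruples a b c e => 1 / ((p.1.1 : ℝ) * p.1.2.1 * p.1.2.2.1 * p.1.2.2.2))
      (16 * π ^ 4 * ∫ x in (0 : ℝ)..1, saw (a * x) * saw (b * x) * saw (c * x) * saw (e * x)) := by
  have hsum := Complex.summable_ofReal.mpr
    ((summable_one_div_mul_mul_mul ha hb hc he).mul_left (16 * π ^ 4)⁻¹)
  simp only [← sawCoeff_mul_mul_mul] at hsum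
  have H := hasSum_sawCoeff_quadruples ha hb hc he hsum
  simp only [sawCoeff_mul_mul_mul, fourierCoeff_zero_dilatedSaw_product, hasSum_ofReal] at H
  refine (H.mul_left (16 * π ^ 4)).congr_fun fun p => ?_
  rw [mul_inv_cancel_left₀ (by positivity)]

end Quadruples

end Franel

theorem reciprocal_sum_eq_franel_integral (a b c e : ℕ)
    (ha : 0 < a) (hb : 0 < b) (hc : 0 < c) (he : 0 < e) :
    (∑' p : {p : ℤ × ℤ × ℤ × ℤ // p.1 ≠ 0 ∧ p.2.1 ≠ 0 ∧ p.2.2.1 ≠ 0 ∧ p.2.2.2 ≠ 0 ∧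
        (a : ℤ) * p.1 + b * p.2.1 + c * p.2.2.1 + e * p.2.2.2 = 0},
      1 / ((p.1.1 : ℝ) * p.1.2.1 * p.1.2.2.1 * p.1.2.2.2)) =
    16 * π ^ 4 * ∫ x in (0:ℝ)..1, saw (a * x) * saw (b * x) * saw (c * x) * saw (e * x) := by
  have h := Franel.hasSum_one_div_mul_mul_mul (Int.natCast_ne_zero.mpr ha.ne')
    (Int.natCast_ne_zero.mpr hb.ne') (Int.natCast_ne_zero.mpr hc.ne')
    (Int.natCast_ne_zero.mpr he.ne')
  simp only [Int.cast_natCast] at h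
  exact h.tsum_eq
end
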